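/- arXiv:1612.09565 — 2 statements merged into one kernel-verified Lean document; each statement's English description precedes it below -/
import Mathlib

section
/- Let Ψ ∈ ℂ^{n×n} be the unitary DFT matrix and let Φ = [Φ_1ᵀ, …, Φ_ℓᵀ]ᵀ ∈ ℂ^{L×n} (L = ℓn) be a concatenation of circulant matrices Φ_j = Ψ* diag(λ_j) Ψ, with λ_j = √n Ψ φ_j, and suppose Φ is injective, i.e. Σ_{j=1}^ℓ |λ_j[k]|² > 0 for all k ∈ [n]. Let 𝒢 = {𝒢_1,…,𝒢_n} be the partition of [L] with 𝒢_k = {(j−1)n + k : j ∈ [ℓ]}. Set T = Φ Ψ* and T̃ = (T†)*, and for any γ > 0 define group local incoherence parameters μ_{𝒢,k} = n γ max_{k'∈[n]} ‖Π_{𝒢_{k'}} T e_k‖_2² and μ̃_{𝒢,k} = n γ^{−1} max_{k'∈[n]} ‖Π_{𝒢_{k'}} T̃ e_k‖_2². Then μ_{𝒢,k} = γ Σ_{j=1}^ℓ |λ_j[k]|² and μ̃_{𝒢,k} = γ^{−1} (Σ_{j=1}^ℓ |λ_j[k]|²)^{−1}, so μ_{𝒢,k} μ̃_{𝒢,k}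 = 1 for every k ∈ [n], and consequently the group variable density sampling distribution P(ω = k) = √(μ_{𝒢,k} μ̃_{𝒢,k})/Σ_{j=1}^n √(μ_{𝒢,j} μ̃_{𝒢,j}) is the uniform distribution on [n]. -/
/-! Since `Ψ` is unitary, the block `Ψ* diag(λ_j)` of `T = ΦΨ*` has entries of modulus
`|λ_j[k]| / √n` in column `k`, so every group `𝒢_{k'}` carries the same share
`(∑_j |λ_j[k]|²) / n` of that column. Moreover `T*T = diag(∑_j |λ_j|²)` is invertible, so
`T† = (T*T)⁻¹ T*` and `T̃ = T (T*T)⁻¹` only rescales column `k` by `(∑_j |λ_j[k]|²)⁻¹`. Hence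
`μ_{𝒢,k}` and `μ̃_{𝒢,k}` are reciprocal, and all the weights `√(μ_{𝒢,k} μ̃_{𝒢,k})` equal `1`. -/

open scoped BigOperators ENNReal
open Classical MeasureTheory
open scoped Matrix

noncomputable section

namespace TSR

/-- ℓ2 norm of a finite complex vector. -/
def l2norm {d : ℕ} (v : Fin d → ℂ) : ℝ := Real.sqrt (∑ i, ‖v i‖ ^ 2)

/-- ℓ1 norm of a finite complex vector. -/
def l1norm {d : ℕ} (v : Fin d → ℂ) : ℝ := ∑ i, ‖v i‖

/-- ℓ∞ norm of a finite complex vector. -/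
def linfnorm {d : ℕ} (v : Fin d → ℂ) : ℝ := ⨆ i, ‖v i‖

/-- Spectral norm (`ℓ2 → ℓ2` operator norm) of a matrix. -/
def specNorm {d e : ℕ} (A : Matrix (Fin d) (Fin e) ℂ) : ℝ :=
  ‖LinearMap.toContinuousLinearMap (Matrix.toEuclideanLin A)‖

/-- Largest singular value. -/
def sigmaMax {d e : ℕ} (A : Matrix (Fin d) (Fin e) ℂ) : ℝ := specNorm A

/-- Smallest singular value: the infimum of `‖A v‖₂` over unit vectors `v`. -/
def sigmaMin {d e : ℕ} (A : Matrix (Fin d) (Fin e) ℂ) : ℝ :=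
  sInf {r : ℝ | ∃ v : Fin e → ℂ, l2norm v = 1 ∧ r = l2norm (A.mulVec v)}

/-- Maximum ℓ2 norm of the columns of a matrix (the `1 → 2` operator norm). -/
def maxColL2 {d e : ℕ} (A : Matrix (Fin d) (Fin e) ℂ) : ℝ :=
  ⨆ k : Fin e, l2norm (fun i => A i k)

/-- `B` is the Moore–Penrose pseudoinverse of `A` (the four Penrose conditions). -/
def IsMoorePenrose {ι κ : Type*} [Fintype ι] [Fintype κ] [DecidableEq ι] [DecidableEq κ]
    (A : Matrix ι κ ℂ) (B : Matrix κ ι ℂ) : Prop :=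
  A * B * A = A ∧ B * A * B = B ∧ (A * B)ᴴ = A * B ∧ (B * A)ᴴ = B * A

/-- `γ > 0` minimizes `‖γ' T*T − I‖` over `γ' > 0` (the balancing parameter). -/
def IsBalancing {e d : ℕ} (T : Matrix (Fin d) (Fin e) ℂ) (γ : ℝ) : Prop :=
  0 < γ ∧ ∀ γ' : ℝ, 0 < γ' →
    specNorm ((γ : ℂ) • (Tᴴ * T) - 1) ≤ specNorm ((γ' : ℂ) • (Tᴴ * T) - 1)

/-- Local incoherence parameter `n γ ‖A e_k‖_∞²` of the `k`-th column. -/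
def locIncoh {e d : ℕ} (γ : ℝ) (A : Matrix (Fin d) (Fin e) ℂ) (k : Fin e) : ℝ :=
  (e : ℝ) * γ * (linfnorm fun i => A i k) ^ 2

/-- The (worst case) incoherence parameter `μ`. -/
def incoherence {e d : ℕ} (γ : ℝ) (T Ttil : Matrix (Fin d) (Fin e) ℂ) : ℝ :=
  ⨆ k : Fin e, max (locIncoh γ T k) (locIncoh γ⁻¹ Ttil k)

/-- The variable-density weight `√(μ_k μ̃_k)`. -/
def vdWeight {e d : ℕ} (γ : ℝ) (T Ttil : Matrix (Fin d) (Fin e) ℂ) (k : Fin e) : ℝ :=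
  Real.sqrt (locIncoh γ T k * locIncoh γ⁻¹ Ttil k)

/-- The average incoherence parameter `μ̄ = (1/n) ∑ √(μ_k μ̃_k)`. -/
def avgIncoh {e d : ℕ} (γ : ℝ) (T Ttil : Matrix (Fin d) (Fin e) ℂ) : ℝ :=
  (1 / (e : ℝ)) * ∑ k, vdWeight γ T Ttil k

/-- The sampling matrix `S_Ω` of a multiset of indices `ω : Fin m → Fin n`. -/
def sampMat {n m : ℕ} (ω : Fin m → Fin n) : Matrix (Fin m) (Fin n) ℂ :=
  fun j k => if ω j = k then 1 else 0

/-- Coordinate projection `Π_J` onto a set of coordinates, as a matrix. -/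
def projMat {d : ℕ} (J : Set (Fin d)) : Matrix (Fin d) (Fin d) ℂ :=
  fun i j => if i = j ∧ i ∈ J then 1 else 0

/-- Number of non-zero entries. -/
def sparsity {d : ℕ} (v : Fin d → ℂ) : ℕ :=
  (Finset.univ.filter fun i => v i ≠ 0).card

/-- Number of distinct elements of the multiset `Ω` (that is, `|Ω'|`). -/
def distinctCard {n m : ℕ} (ω : Fin m → Fin n) : ℕ :=
  (Finset.image ω Finset.univ).card

/-- Maximal multiplicity of an element of the multiset `Ω`. -/
def maxMult {n m : ℕ} (ω : Fin m → Fin n) : ℕ :=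
  Finset.univ.sup fun k : Fin n => (Finset.univ.filter fun j => ω j = k).card

/-- Entrywise complex signum. -/
def csgn {d : ℕ} (z : Fin d → ℂ) : Fin d → ℂ :=
  fun k => if z k = 0 then 0 else z k / (‖z k‖ : ℂ)

/-- `G` is a partition of the coordinates into disjoint nonempty groups. -/
def IsPartition {L N : ℕ} (G : Fin N → Finset (Fin L)) : Prop :=
  (∀ j, (G j).Nonempty) ∧ (∀ j j', j ≠ j' → Disjoint (G j) (G j')) ∧
    Finset.univ.biUnion G = Finset.univ

/-- The mixed (group) norm `‖z‖_{𝒢,1} = ∑_j ‖Π_{𝒢_j} z‖₂`. -/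
def mixedNorm {L N : ℕ} (G : Fin N → Finset (Fin L)) (z : Fin L → ℂ) : ℝ :=
  ∑ j, Real.sqrt (∑ i ∈ G j, ‖z i‖ ^ 2)

/-- `z` is `(s,t)` strongly group sparse with respect to the partition `G`. -/
def StronglyGroupSparse {L N : ℕ} (G : Fin N → Finset (Fin L)) (s t : ℕ)
    (z : Fin L → ℂ) : Prop :=
  ∃ J : Finset (Fin N), (∀ i, z i ≠ 0 → i ∈ J.biUnion G) ∧
    (J.biUnion G).card ≤ t ∧ J.card ≤ s

/-- Group local incoherence `max_j n γ ‖Π_{𝒢_j} A e_k‖₂²`. -/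
def groupLocIncoh {n L N : ℕ} (G : Fin N → Finset (Fin L)) (γ : ℝ)
    (A : Matrix (Fin L) (Fin n) ℂ) (k : Fin n) : ℝ :=
  ⨆ j : Fin N, (n : ℝ) * γ * ∑ i ∈ G j, ‖A i k‖ ^ 2

/-- Group incoherence parameter `μ_𝒢`. -/
def groupIncoh {n L N : ℕ} (G : Fin N → Finset (Fin L)) (γ : ℝ)
    (T Ttil : Matrix (Fin L) (Fin n) ℂ) : ℝ :=
  ⨆ k : Fin n, max (groupLocIncoh G γ T k) (groupLocIncoh G γ⁻¹ Ttil k)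

/-- Group variable density weight `√(μ_{𝒢,k} μ̃_{𝒢,k})`. -/
def groupVdWeight {n L N : ℕ} (G : Fin N → Finset (Fin L)) (γ : ℝ)
    (T Ttil : Matrix (Fin L) (Fin n) ℂ) (k : Fin n) : ℝ :=
  Real.sqrt (groupLocIncoh G γ T k * groupLocIncoh G γ⁻¹ Ttil k)

/-- Group average incoherence `μ̄_𝒢`. -/
def groupAvgIncoh {n L N : ℕ} (G : Fin N → Finset (Fin L)) (γ : ℝ)
    (T Ttil : Matrix (Fin L) (Fin n) ℂ) : ℝ :=
  (1 / (n : ℝ)) * ∑ k, groupVdWeight G γ T Ttil k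

/-- The unitary DFT matrix. -/
def dft (n : ℕ) : Matrix (Fin n) (Fin n) ℂ :=
  fun j k => ((1 / Real.sqrt n : ℝ) : ℂ) *
    Complex.exp (-(2 * Real.pi * Complex.I * (j : ℕ) * (k : ℕ)) / n)

end TSR

theorem Matrix.conjTranspose_mul_self_eq_sum_submatrix {ι μ κ α : Type*} [Fintype ι] [Fintype μ]
    [NonUnitalNonAssocSemiring α] [StarRing α] (T : Matrix (ι × μ) κ α) :
    Tᴴ * T = ∑ j, (T.submatrix (Prod.mk j) id)ᴴ * T.submatrix (Prod.mk j) id := by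
  ext k k'
  simp [Matrix.mul_apply, Fintype.sum_prod_type, Matrix.sum_apply]

namespace TSR

open Complex in
theorem dft_apply_eq_pow {n : ℕ} (j k : Fin n) :
    dft n j k =
      ((1 / Real.sqrt n : ℝ) : ℂ) * (exp (2 * Real.pi * I / n))⁻¹ ^ ((j : ℕ) * (k : ℕ)) := by
  rw [dft, ← exp_neg, ← exp_nat_mul]
  congr 2
  push_cast
  ring

theorem norm_dft_apply {n : ℕ} (j k : Fin n) : ‖dft n j k‖ = 1 / Real.sqrt n := by
  have hζ := (Complex.isPrimitiveRoot_exp n k.pos.ne').inv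
  rw [dft_apply_eq_pow, norm_mul, norm_pow, hζ.norm'_eq_one k.pos.ne']
  simp

open Complex Matrix in
theorem dft_mul_conjTranspose (n : ℕ) : dft n * (dft n)ᴴ = 1 := by
  ext j k
  have hn : n ≠ 0 := j.pos.ne'
  set ζ := (exp (2 * Real.pi * I / n))⁻¹
  have hdft : ∀ a b, dft n a b = ((1 / Real.sqrt n : ℝ) : ℂ) * ζ ^ ((a : ℕ) * (b : ℕ)) :=
    dft_apply_eq_pow
  have hζ : IsPrimitiveRoot ζ n := (isPrimitiveRoot_exp n hn).inv
  clear_value ζ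
  have hζ0 : ζ ≠ 0 := hζ.ne_zero hn
  have hstar : star ζ = ζ⁻¹ := (inv_eq_conj (hζ.norm'_eq_one hn)).symm
  have hc : ((1 / Real.sqrt n : ℝ) : ℂ) * star ((1 / Real.sqrt n : ℝ) : ℂ) = (n : ℂ)⁻¹ := by
    rw [Complex.star_def, conj_ofReal, ← ofReal_mul, div_mul_div_comm,
      Real.mul_self_sqrt n.cast_nonneg]
    simp
  set ω := ζ ^ (j : ℕ) * (ζ ^ (k : ℕ))⁻¹ with hω
  have hterm : ∀ m : Fin n, dft n j m * star (dft n k m) = (n : ℂ)⁻¹ * ω ^ (m : ℕ) := by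
    intro m
    rw [hdft, hdft, star_mul', star_pow, hstar, ← hc, hω]
    simp only [mul_pow, inv_pow, ← pow_mul]
    ring
  simp only [mul_apply, conjTranspose_apply, hterm, ← Finset.mul_sum,
    Fin.sum_univ_eq_sum_range (fun m => ω ^ m)]
  by_cases hjk : j = k
  · subst hjk
    simp [hω, hζ0, hn]
  · have hω1 : ω ≠ 1 := fun h =>
      hjk (Fin.ext (hζ.pow_inj j.2 k.2 ((mul_inv_eq_one₀ (pow_ne_zero _ hζ0)).mp h)))
    have hωn : ω ^ n = 1 := by
      rw [hω, mul_pow, inv_pow, ← pow_mul, ← pow_mul, mul_comm (j : ℕ), mul_comm (k : ℕ), pow_mul,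
        pow_mul, hζ.pow_eq_one, one_pow, one_pow, inv_one, mul_one]
    rw [geom_sum_eq hω1, hωn, sub_self, zero_div, mul_zero, one_apply_ne hjk]

namespace IsMoorePenrose

variable {ι κ : Type*} [Fintype ι] [Fintype κ] [DecidableEq ι] [DecidableEq κ]
  {A : Matrix ι κ ℂ} {B C : Matrix κ ι ℂ}

open Matrix

theorem unique (hB : IsMoorePenrose A B) (hC : IsMoorePenrose A C) : B = C := by
  obtain ⟨hB1, hB2, hB3, hB4⟩ := hB
  obtain ⟨hC1, hC2, hC3, hC4⟩ := hC
  have hBAC : B = B * A * C :=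
    calc B = B * (A * B)ᴴ := by rw [hB3, ← Matrix.mul_assoc, hB2]
      _ = B * (Bᴴ * (A * C * A)ᴴ) := by rw [conjTranspose_mul, hC1]
      _ = B * ((A * B)ᴴ * (A * C)ᴴ) := by simp only [conjTranspose_mul, Matrix.mul_assoc]
      _ = B * A * C := by rw [hB3, hC3]; simp only [← Matrix.mul_assoc, hB2]
  have hCAC : C = B * A * C :=
    calc C = (C * A)ᴴ * C := by rw [hC4, hC2]
      _ = (A * B * A)ᴴ * Cᴴ * C := by rw [hB1, conjTranspose_mul]
      _ = (B * A)ᴴ * (C * A)ᴴ * C := by simp only [conjTranspose_mul, Matrix.mul_assoc]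
      _ = B * A * C := by rw [hB4, hC4]; simp only [Matrix.mul_assoc, hC2]
  rw [hBAC, ← hCAC]

theorem of_mul_conjTranspose_mul_self_eq_one {D : Matrix κ κ ℂ} (hD : D.IsHermitian)
    (h : D * (Aᴴ * A) = 1) : IsMoorePenrose A (D * Aᴴ) := by
  have hCA : D * Aᴴ * A = 1 := by rw [Matrix.mul_assoc, h]
  refine ⟨?_, ?_, ?_, ?_⟩
  · rw [Matrix.mul_assoc, hCA, Matrix.mul_one]
  · rw [hCA, Matrix.one_mul]
  · rw [conjTranspose_mul, conjTranspose_mul, conjTranspose_conjTranspose, hD.eq,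
      Matrix.mul_assoc]
  · rw [hCA, conjTranspose_one]

end IsMoorePenrose

section CirculantUnion

open Matrix

variable {n l : ℕ} (lb : Fin l → Fin n → ℂ)

/-- `T = ΦΨ*` for the stack `Φ` of the circulants `Ψ* diag(lb j) Ψ`. -/
def circulantUnion : Matrix (Fin l × Fin n) (Fin n) ℂ :=
  fun p k => (((dft n)ᴴ * Matrix.diagonal (lb p.1) * dft n) * (dft n)ᴴ) p.2 k

theorem circulantUnion_submatrix (j : Fin l) :
    (circulantUnion lb).submatrix (Prod.mk j) id = (dft n)ᴴ * diagonal (lb j) := by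
  ext m k
  simp [circulantUnion, Matrix.mul_assoc, dft_mul_conjTranspose]

theorem circulantUnion_apply (j : Fin l) (m k : Fin n) :
    circulantUnion lb (j, m) k = star (dft n k m) * lb j k := by
  change (circulantUnion lb).submatrix (Prod.mk j) id m k = _
  rw [circulantUnion_submatrix, mul_diagonal, conjTranspose_apply]

theorem conjTranspose_mul_circulantUnion :
    (circulantUnion lb)ᴴ * circulantUnion lb = diagonal fun k => ((∑ j, ‖lb j k‖ ^ 2 : ℝ) : ℂ) := by
  simp only [conjTranspose_mul_self_eq_sum_submatrix, circulantUnion_submatrix, conjTranspose_mul,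
    conjTranspose_conjTranspose, Matrix.mul_assoc, ← Matrix.mul_assoc (dft n),
    dft_mul_conjTranspose, Matrix.one_mul, diagonal_conjTranspose, diagonal_mul_diagonal]
  ext k k'
  by_cases hkk : k = k'
  · subst hkk
    simp [Matrix.sum_apply, Complex.conj_mul']
  · simp [Matrix.sum_apply, hkk]

theorem sum_norm_sq_circulantUnion_apply (m k : Fin n) :
    ∑ j, ‖circulantUnion lb (j, m) k‖ ^ 2 = (∑ j, ‖lb j k‖ ^ 2) / n := by
  simp only [circulantUnion_apply, norm_mul, norm_star, norm_dft_apply, mul_pow, div_pow,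
    Real.sq_sqrt n.cast_nonneg, ← Finset.mul_sum]
  ring

variable {lb}

theorem conjTranspose_eq_circulantUnion_mul_diagonal (hlb : ∀ k, ∑ j, ‖lb j k‖ ^ 2 ≠ 0)
    {B : Matrix (Fin n) (Fin l × Fin n) ℂ} (hB : IsMoorePenrose (circulantUnion lb) B) :
    Bᴴ = circulantUnion lb * diagonal fun k => (((∑ j, ‖lb j k‖ ^ 2)⁻¹ : ℝ) : ℂ) := by
  set D : Matrix (Fin n) (Fin n) ℂ := diagonal fun k => (((∑ j, ‖lb j k‖ ^ 2)⁻¹ : ℝ) : ℂ)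
  have hD : D.IsHermitian := by
    simp [D, IsHermitian, diagonal_conjTranspose]
  have hDT : D * ((circulantUnion lb)ᴴ * circulantUnion lb) = 1 := by
    rw [conjTranspose_mul_circulantUnion, diagonal_mul_diagonal, ← diagonal_one]
    congr 1
    ext k
    rw [← Complex.ofReal_mul, inv_mul_cancel₀ (hlb k), Complex.ofReal_one]
  rw [hB.unique (.of_mul_conjTranspose_mul_self_eq_one hD hDT), conjTranspose_mul,
    conjTranspose_conjTranspose, hD.eq]

theorem sum_norm_sq_conjTranspose_apply_of_isMoorePenrose (hlb : ∀ k, ∑ j, ‖lb j k‖ ^ 2 ≠ 0)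
    {B : Matrix (Fin n) (Fin l × Fin n) ℂ} (hB : IsMoorePenrose (circulantUnion lb) B)
    (m k : Fin n) : ∑ j, ‖Bᴴ (j, m) k‖ ^ 2 = (∑ j, ‖lb j k‖ ^ 2)⁻¹ / n := by
  simp only [conjTranspose_eq_circulantUnion_mul_diagonal hlb hB, mul_diagonal, norm_mul,
    Complex.norm_real, Real.norm_eq_abs, mul_pow, sq_abs, ← Finset.sum_mul,
    sum_norm_sq_circulantUnion_apply]
  field_simp [hlb k]

end CirculantUnion

theorem natCast_mul_mul_iSup_of_forall_eq_div {n : ℕ} [NeZero n] {f : Fin n → ℝ} {c : ℝ} (γ : ℝ)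
    (hf : ∀ m, f m = c / n) : (n : ℝ) * γ * ⨆ m, f m = γ * c := by
  simp only [hf, ciSup_const]
  field_simp [NeZero.ne n]

/-- The groups `𝒢_k = {(j−1)n + k : j ∈ [ℓ]}` are encoded as `{(j, k) : j ∈ Fin ℓ}` via the index
identification `Fin ℓ × Fin n ≃ Fin (ℓ n)`. -/
theorem circulant_union_uniform_density_general
    (n l : ℕ) (γ : ℝ) (hγ : 0 < γ)
    (lb : Fin l → Fin n → ℂ)
    (hinjective : ∀ k, 0 < ∑ j, ‖lb j k‖ ^ 2)
    (T : Matrix (Fin l × Fin n) (Fin n) ℂ)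
    (hT : T = fun p k =>
      (((dft n)ᴴ * Matrix.diagonal (lb p.1) * dft n) * (dft n)ᴴ) p.2 k)
    (Tdag : Matrix (Fin n) (Fin l × Fin n) ℂ)
    (hTdag : IsMoorePenrose T Tdag) :
    (∀ k : Fin n,
        ((n : ℝ) * γ * ⨆ k' : Fin n, ∑ j : Fin l, ‖T (j, k') k‖ ^ 2) =
          γ * ∑ j, ‖lb j k‖ ^ 2 ∧
        ((n : ℝ) * γ⁻¹ * ⨆ k' : Fin n, ∑ j : Fin l, ‖Tdagᴴ (j, k') k‖ ^ 2) =
          γ⁻¹ * (∑ j, ‖lb j k‖ ^ 2)⁻¹) ∧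
    (∀ k : Fin n,
        ((n : ℝ) * γ * ⨆ k' : Fin n, ∑ j : Fin l, ‖T (j, k') k‖ ^ 2) *
          ((n : ℝ) * γ⁻¹ * ⨆ k' : Fin n, ∑ j : Fin l, ‖Tdagᴴ (j, k') k‖ ^ 2) = 1) ∧
    (∀ k : Fin n,
        Real.sqrt (((n : ℝ) * γ * ⨆ k' : Fin n, ∑ j : Fin l, ‖T (j, k') k‖ ^ 2) *
            ((n : ℝ) * γ⁻¹ * ⨆ k' : Fin n, ∑ j : Fin l, ‖Tdagᴴ (j, k') k‖ ^ 2)) /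
          (∑ k'' : Fin n,
            Real.sqrt (((n : ℝ) * γ * ⨆ k' : Fin n, ∑ j : Fin l, ‖T (j, k') k''‖ ^ 2) *
              ((n : ℝ) * γ⁻¹ * ⨆ k' : Fin n, ∑ j : Fin l, ‖Tdagᴴ (j, k') k''‖ ^ 2))) =
          1 / n) := by
  obtain rfl : T = circulantUnion lb := hT
  have hμ (k : Fin n) : (n : ℝ) * γ * ⨆ k', ∑ j, ‖circulantUnion lb (j, k') k‖ ^ 2 =
      γ * ∑ j, ‖lb j k‖ ^ 2 :=
    have : NeZero n := .of_pos k.pos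
    natCast_mul_mul_iSup_of_forall_eq_div γ (sum_norm_sq_circulantUnion_apply lb · k)
  have hμ' (k : Fin n) : (n : ℝ) * γ⁻¹ * ⨆ k', ∑ j, ‖Tdagᴴ (j, k') k‖ ^ 2 =
      γ⁻¹ * (∑ j, ‖lb j k‖ ^ 2)⁻¹ :=
    have : NeZero n := .of_pos k.pos
    natCast_mul_mul_iSup_of_forall_eq_div γ⁻¹
      (sum_norm_sq_conjTranspose_apply_of_isMoorePenrose (fun k => (hinjective k).ne') hTdag · k)
  have hprod (k : Fin n) : ((n : ℝ) * γ * ⨆ k', ∑ j, ‖circulantUnion lb (j, k') k‖ ^ 2) *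
      ((n : ℝ) * γ⁻¹ * ⨆ k', ∑ j, ‖Tdagᴴ (j, k') k‖ ^ 2) = 1 := by
    rw [hμ, hμ']
    field_simp [hγ.ne', (hinjective k).ne']
  refine ⟨fun k => ⟨hμ k, hμ' k⟩, hprod, fun k => ?_⟩
  simp only [hprod, Real.sqrt_one, Finset.sum_const, Finset.card_univ, Fintype.card_fin,
    nsmul_eq_mul, mul_one]

/-- Theorem 15 (uniform sampling density for an injective union of circulant
transforms, with the groups `𝒢_k = {(j−1)n + k : j ∈ [ℓ]}` encoded as `{(j, k) : j ∈ Fin ℓ}`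
via the index identification `Fin ℓ × Fin n ≃ Fin (ℓ n)`). -/
theorem circulant_union_uniform_density
    (n l : ℕ) (hn : 0 < n) (hl : 0 < l) (γ : ℝ) (hγ : 0 < γ)
    (φ lb : Fin l → Fin n → ℂ)
    (hlb : ∀ j, lb j = fun k => ((Real.sqrt n : ℝ) : ℂ) * (dft n).mulVec (φ j) k)
    (hinjective : ∀ k, 0 < ∑ j, ‖lb j k‖ ^ 2)
    (T : Matrix (Fin l × Fin n) (Fin n) ℂ)
    (hT : T = fun p k =>
      (((dft n)ᴴ * Matrix.diagonal (lb p.1) * dft n) * (dft n)ᴴ) p.2 k)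
    (Tdag : Matrix (Fin n) (Fin l × Fin n) ℂ)
    (hTdag : IsMoorePenrose T Tdag) :
    (∀ k : Fin n,
        ((n : ℝ) * γ * ⨆ k' : Fin n, ∑ j : Fin l, ‖T (j, k') k‖ ^ 2) =
          γ * ∑ j, ‖lb j k‖ ^ 2 ∧
        ((n : ℝ) * γ⁻¹ * ⨆ k' : Fin n, ∑ j : Fin l, ‖Tdagᴴ (j, k') k‖ ^ 2) =
          γ⁻¹ * (∑ j, ‖lb j k‖ ^ 2)⁻¹) ∧
    (∀ k : Fin n,
        ((n : ℝ) * γ * ⨆ k' : Fin n, ∑ j : Fin l, ‖T (j, k') k‖ ^ 2) *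
          ((n : ℝ) * γ⁻¹ * ⨆ k' : Fin n, ∑ j : Fin l, ‖Tdagᴴ (j, k') k‖ ^ 2) = 1) ∧
    (∀ k : Fin n,
        Real.sqrt (((n : ℝ) * γ * ⨆ k' : Fin n, ∑ j : Fin l, ‖T (j, k') k‖ ^ 2) *
            ((n : ℝ) * γ⁻¹ * ⨆ k' : Fin n, ∑ j : Fin l, ‖Tdagᴴ (j, k') k‖ ^ 2)) /
          (∑ k'' : Fin n,
            Real.sqrt (((n : ℝ) * γ * ⨆ k' : Fin n, ∑ j : Fin l, ‖T (j, k') k''‖ ^ 2) *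
              ((n : ℝ) * γ⁻¹ * ⨆ k' : Fin n, ∑ j : Fin l, ‖Tdagᴴ (j, k') k''‖ ^ 2))) =
          1 / n) :=
  circulant_union_uniform_density_general n l γ hγ lb hinjective T hT Tdag hTdag

end TSR
end
end

section
/- Let T : ℂ^n → ℂ^N be injective, let x ∈ ℂ^n, and let J ⊆ [N] be the support of Tx. Let Ω be a multiset of m indices in [n] and Ω' the set of its distinct elements. Suppose ‖ Π_J ( (n/m) T S_Ω* S_Ω T† − T T† ) Π_J ‖ ≤ 1/2, and suppose there exists v ∈ ℂ^N satisfying: (i) (T T† − T S_{Ω'}* S_{Ω'} T†)* v = 0; (ii) ‖Π_J ( v − sgn(Tx) )‖_2 ≤ 1/(7 n ‖T‖_{1→2} ‖T†‖_{2→∞}); and (iii) ‖(I_N − Π_J) v‖_∞ ≤ 1/2. Then x is the unique minimizer of the program (P0): minimize ‖T g‖_1 over g ∈ ℂ^n subject to S_Ω g = S_Ω x. -/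
/-!
Put `z = T (g - x) ≠ 0` and `K = n ‖T‖_{1→2} ‖T†‖_{2→∞}`. Since `S_Ω (g - x) = 0`, the operator
`B = (n/m) T S_Ω* S_Ω T† - T T†` maps `z` to `-z`, so `‖Π_J B Π_J‖ ≤ 1/2` controls the part of `z`
on `J` by the part off `J`: `‖Π_J z‖₂ ≤ 2 ‖B Π_Jᶜ z‖₂ ≤ 2 (K + 1) ‖Π_Jᶜ z‖₁`. The certificate `v` is
orthogonal to `z`, so the subgradient inequality of the ℓ1 norm at `T x` gives
`‖T x + z‖₁ ≥ ‖T x‖₁ - ‖Π_J (v - sgn T x)‖₂ ‖Π_J z‖₂ + ‖Π_Jᶜ z‖₁ / 2`, and for `K ≥ 2` the loss is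
at most `3/7 ‖Π_Jᶜ z‖₁`. The part off `J` is nonzero, since otherwise the first bound forces
`z = 0`. `K ≥ 2` follows from `n ≥ 2`, as `T† T = 1` forces `‖T‖_{1→2} ‖T†‖_{2→∞} ≥ 1`; for
`n ≤ 1` a single sample already determines `g`.
-/

open scoped BigOperators ENNReal
open Classical MeasureTheory
open scoped Matrix

noncomputable section

namespace TSR

open Matrix

section Norms

variable {d e : ℕ}

lemma l2norm_eq_norm_toLp (v : Fin d → ℂ) : l2norm v = ‖WithLp.toLp 2 v‖ := by
  rw [EuclideanSpace.norm_eq]; rfl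

lemma l2norm_nonneg (v : Fin d → ℂ) : 0 ≤ l2norm v := Real.sqrt_nonneg _

lemma l2norm_eq_zero_iff {v : Fin d → ℂ} : l2norm v = 0 ↔ v = 0 := by
  rw [l2norm_eq_norm_toLp, norm_eq_zero, WithLp.toLp_eq_zero]

lemma l2norm_add_le (a b : Fin d → ℂ) : l2norm (a + b) ≤ l2norm a + l2norm b := by
  simpa only [l2norm_eq_norm_toLp, WithLp.toLp_add] using norm_add_le _ _

lemma l2norm_neg (a : Fin d → ℂ) : l2norm (-a) = l2norm a := by
  simp [l2norm]

lemma l2norm_smul (c : ℂ) (a : Fin d → ℂ) : l2norm (c • a) = ‖c‖ * l2norm a := by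
  simpa only [l2norm_eq_norm_toLp, WithLp.toLp_smul] using norm_smul _ _

lemma l2norm_sum_le {ι : Type*} (s : Finset ι) (f : ι → Fin d → ℂ) :
    l2norm (∑ k ∈ s, f k) ≤ ∑ k ∈ s, l2norm (f k) := by
  simpa only [l2norm_eq_norm_toLp, WithLp.toLp_sum] using norm_sum_le _ _

lemma norm_le_l2norm (v : Fin d → ℂ) (i : Fin d) : ‖v i‖ ≤ l2norm v := by
  rw [l2norm_eq_norm_toLp]
  exact PiLp.norm_apply_le (WithLp.toLp 2 v) i

lemma l2norm_indicator_le (J : Set (Fin d)) (v : Fin d → ℂ) : l2norm (J.indicator v) ≤ l2norm v :=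
  Real.sqrt_le_sqrt <| Finset.sum_le_sum fun i _ => by
    by_cases hi : i ∈ J <;> simp [hi]

lemma norm_star_dotProduct_le (a b : Fin d → ℂ) : ‖star a ⬝ᵥ b‖ ≤ l2norm a * l2norm b := by
  calc ‖star a ⬝ᵥ b‖ ≤ ∑ i, ‖a i‖ * ‖b i‖ := by
        simpa [dotProduct] using norm_sum_le Finset.univ fun i => star (a i) * b i
    _ ≤ l2norm a * l2norm b := Real.sum_mul_le_sqrt_mul_sqrt _ _ _

lemma l1norm_nonneg (v : Fin d → ℂ) : 0 ≤ l1norm v :=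
  Finset.sum_nonneg fun _ _ => norm_nonneg _

lemma l1norm_eq_zero_iff {v : Fin d → ℂ} : l1norm v = 0 ↔ v = 0 := by
  simp [l1norm, Finset.sum_eq_zero_iff_of_nonneg, funext_iff]

lemma norm_le_linfnorm (v : Fin d → ℂ) (i : Fin d) : ‖v i‖ ≤ linfnorm v :=
  le_ciSup (f := fun i => ‖v i‖) (Set.finite_range _).bddAbove i

lemma l2norm_mulVec_le_specNorm (A : Matrix (Fin d) (Fin e) ℂ) (v : Fin e → ℂ) :
    l2norm (A *ᵥ v) ≤ specNorm A * l2norm v := by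
  simpa [l2norm_eq_norm_toLp, specNorm] using
    (LinearMap.toContinuousLinearMap (Matrix.toEuclideanLin A)).le_opNorm (WithLp.toLp 2 v)

end Norms

section ColumnNorms

variable {d e : ℕ}

lemma l2norm_col_le_maxColL2 (A : Matrix (Fin d) (Fin e) ℂ) (k : Fin e) :
    l2norm (fun i => A i k) ≤ maxColL2 A :=
  le_ciSup (f := fun k => l2norm fun i => A i k) (Set.finite_range _).bddAbove k

lemma maxColL2_nonneg (A : Matrix (Fin d) (Fin e) ℂ) : 0 ≤ maxColL2 A :=
  Real.iSup_nonneg fun _ => l2norm_nonneg _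

lemma norm_apply_le_maxColL2_conjTranspose (A : Matrix (Fin d) (Fin e) ℂ) (i : Fin d)
    (k : Fin e) : ‖A i k‖ ≤ maxColL2 Aᴴ := by
  simpa [conjTranspose_apply] using
    (norm_le_l2norm (fun j => Aᴴ j i) k).trans (l2norm_col_le_maxColL2 Aᴴ i)

lemma l2norm_mulVec_le_maxColL2_mul_l1norm (A : Matrix (Fin d) (Fin e) ℂ) (v : Fin e → ℂ) :
    l2norm (A *ᵥ v) ≤ maxColL2 A * l1norm v := by
  have hcols : A *ᵥ v = ∑ k, v k • fun i => A i k := by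
    ext i
    simp [mulVec, dotProduct, Finset.sum_apply, mul_comm]
  rw [hcols, l1norm, Finset.mul_sum]
  refine (l2norm_sum_le _ _).trans (Finset.sum_le_sum fun k _ => ?_)
  rw [l2norm_smul, mul_comm]
  exact mul_le_mul_of_nonneg_right (l2norm_col_le_maxColL2 A k) (norm_nonneg _)

lemma norm_mulVec_apply_le (A : Matrix (Fin d) (Fin e) ℂ) (v : Fin e → ℂ) (i : Fin d) :
    ‖(A *ᵥ v) i‖ ≤ maxColL2 Aᴴ * l1norm v := by
  rw [l1norm, Finset.mul_sum]
  refine (norm_sum_le Finset.univ fun k => A i k * v k).trans (Finset.sum_le_sum fun k _ => ?_)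
  rw [norm_mul]
  exact mul_le_mul_of_nonneg_right (norm_apply_le_maxColL2_conjTranspose A i k) (norm_nonneg _)

lemma one_le_maxColL2_mul_maxColL2_conjTranspose (A : Matrix (Fin d) (Fin e) ℂ)
    (B : Matrix (Fin e) (Fin d) ℂ) (hBA : B * A = 1) (k : Fin e) :
    1 ≤ maxColL2 A * maxColL2 Bᴴ := by
  have hdiag : (B * A) k k = star (fun i => Bᴴ i k) ⬝ᵥ fun i => A i k := by
    simp [mul_apply, dotProduct, conjTranspose_apply]
  calc (1 : ℝ) = ‖(B * A : Matrix (Fin e) (Fin e) ℂ) k k‖ := by simp [hBA]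
    _ ≤ l2norm (fun i => Bᴴ i k) * l2norm (fun i => A i k) :=
        hdiag ▸ norm_star_dotProduct_le _ _
    _ ≤ maxColL2 Bᴴ * maxColL2 A :=
        mul_le_mul (l2norm_col_le_maxColL2 _ _) (l2norm_col_le_maxColL2 _ _)
          (l2norm_nonneg _) (maxColL2_nonneg _)
    _ = maxColL2 A * maxColL2 Bᴴ := mul_comm _ _

lemma maxColL2_le_one_of_isHermitian_of_isIdempotentElem {P : Matrix (Fin d) (Fin d) ℂ}
    (hP : P.IsHermitian) (hP2 : IsIdempotentElem P) : maxColL2 P ≤ 1 := by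
  refine Real.iSup_le (fun k => ?_) zero_le_one
  set s : ℝ := ∑ i, ‖P i k‖ ^ 2
  have hs : 0 ≤ s := Finset.sum_nonneg fun _ _ => by positivity
  -- `P k k = (Pᴴ * P) k k` is the squared norm `s` of the `k`-th column, and `|P k k|² ≤ s`.
  have hdiag : P k k = s := by
    rw [← hP2.eq]
    nth_rw 1 [← hP.eq]
    simp [s, mul_apply, conjTranspose_apply, Complex.conj_mul']
  have hsq : s ^ 2 ≤ s := by
    have := Finset.single_le_sum (f := fun i => ‖P i k‖ ^ 2) (fun _ _ => by positivity)
      (Finset.mem_univ k)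
    simpa [hdiag, abs_of_nonneg hs] using this
  exact Real.sqrt_le_one.mpr (by nlinarith)

end ColumnNorms

section Operators

variable {n m N : ℕ}

lemma sampMat_mulVec_apply (ω : Fin m → Fin n) (y : Fin n → ℂ) (j : Fin m) :
    (sampMat ω *ᵥ y) j = y (ω j) := by
  simp [sampMat, mulVec, dotProduct]

lemma sampMat_mulVec_injective_of_le_one (hn : n ≤ 1) (hm : 0 < m) (ω : Fin m → Fin n) :
    Function.Injective (sampMat ω).mulVec := by
  intro g h hgh
  ext k
  have hk : k = ω ⟨0, hm⟩ := Fin.ext (by omega)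
  simpa [sampMat_mulVec_apply, ← hk] using congrFun hgh ⟨0, hm⟩

lemma mul_sampMat_conjTranspose_apply (T : Matrix (Fin N) (Fin n) ℂ) (ω : Fin m → Fin n)
    (i : Fin N) (j : Fin m) : (T * (sampMat ω)ᴴ) i j = T i (ω j) := by
  simp [sampMat, mul_apply, conjTranspose_apply, apply_ite star, eq_comm]

lemma projMat_mulVec (J : Set (Fin N)) (y : Fin N → ℂ) : projMat J *ᵥ y = J.indicator y := by
  ext i
  by_cases hi : i ∈ J <;> simp [projMat, mulVec, dotProduct, hi, Set.indicator]

lemma projMat_range_mulVec_eq_zero {ω : Fin m → Fin n} {u : Fin n → ℂ}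
    (hu : sampMat ω *ᵥ u = 0) : projMat (Set.range ω) *ᵥ u = 0 := by
  rw [projMat_mulVec]
  ext k
  by_cases hk : k ∈ Set.range ω
  · obtain ⟨j, rfl⟩ := hk
    simpa [sampMat_mulVec_apply] using congrFun hu j
  · simp [hk]

lemma one_sub_projMat_mulVec (J : Set (Fin N)) (y : Fin N → ℂ) :
    (1 - projMat J) *ᵥ y = Jᶜ.indicator y := by
  rw [sub_mulVec, one_mulVec, projMat_mulVec, sub_eq_iff_eq_add', Set.indicator_self_add_compl]

lemma star_dotProduct_eq_zero_of_conjTranspose_mulVec_eq_zero {ι R : Type*} [Fintype ι]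
    [NonUnitalSemiring R] [StarRing R] {A : Matrix ι ι R} {v z : ι → R} (hv : Aᴴ *ᵥ v = 0)
    (hz : A *ᵥ z = z) : star v ⬝ᵥ z = 0 := by
  have hstar := star_mulVec Aᴴ v
  rw [conjTranspose_conjTranspose, hv, star_zero] at hstar
  rw [← hz, dotProduct_mulVec, ← hstar, zero_dotProduct]

lemma IsMoorePenrose.pinv_mul_eq_one {T : Matrix (Fin N) (Fin n) ℂ}
    {Tdag : Matrix (Fin n) (Fin N) ℂ} (hmp : IsMoorePenrose T Tdag)
    (hinj : Function.Injective T.mulVec) : Tdag * T = 1 := by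
  refine ext_of_mulVec_single fun k => hinj ?_
  rw [mulVec_mulVec, ← Matrix.mul_assoc, hmp.1, one_mulVec]

lemma IsMoorePenrose.maxColL2_mul_pinv_le_one {T : Matrix (Fin N) (Fin n) ℂ}
    {Tdag : Matrix (Fin n) (Fin N) ℂ} (hmp : IsMoorePenrose T Tdag) : maxColL2 (T * Tdag) ≤ 1 :=
  maxColL2_le_one_of_isHermitian_of_isIdempotentElem hmp.2.2.1 <| by
    rw [IsIdempotentElem, ← Matrix.mul_assoc, hmp.1]

lemma l2norm_sampling_mulVec_le (T : Matrix (Fin N) (Fin n) ℂ) (Tdag : Matrix (Fin n) (Fin N) ℂ)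
    (ω : Fin m → Fin n) (y : Fin N → ℂ) :
    l2norm ((T * (sampMat ω)ᴴ * sampMat ω * Tdag) *ᵥ y) ≤
      m * (maxColL2 T * maxColL2 Tdagᴴ) * l1norm y := by
  have hcols : maxColL2 (T * (sampMat ω)ᴴ) ≤ maxColL2 T := by
    refine Real.iSup_le (fun j => ?_) (maxColL2_nonneg T)
    simpa only [mul_sampMat_conjTranspose_apply] using l2norm_col_le_maxColL2 T (ω j)
  have hsamples : l1norm (sampMat ω *ᵥ (Tdag *ᵥ y)) ≤ m * (maxColL2 Tdagᴴ * l1norm y) := by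
    simpa [l1norm, sampMat_mulVec_apply] using
      Finset.sum_le_sum fun j (_ : j ∈ Finset.univ) => norm_mulVec_apply_le Tdag y (ω j)
  rw [← mulVec_mulVec, ← mulVec_mulVec]
  calc _ ≤ maxColL2 (T * (sampMat ω)ᴴ) * l1norm (sampMat ω *ᵥ (Tdag *ᵥ y)) :=
        l2norm_mulVec_le_maxColL2_mul_l1norm _ _
    _ ≤ maxColL2 T * (m * (maxColL2 Tdagᴴ * l1norm y)) :=
        mul_le_mul hcols hsamples (l1norm_nonneg _) (maxColL2_nonneg T)
    _ = _ := by ring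

lemma l2norm_sampling_sub_mulVec_le {T : Matrix (Fin N) (Fin n) ℂ}
    {Tdag : Matrix (Fin n) (Fin N) ℂ} (hmp : IsMoorePenrose T Tdag) (ω : Fin m → Fin n)
    (y : Fin N → ℂ) :
    l2norm ((((n : ℂ) / m) • (T * (sampMat ω)ᴴ * sampMat ω * Tdag) - T * Tdag) *ᵥ y) ≤
      (n * maxColL2 T * maxColL2 Tdagᴴ + 1) * l1norm y := by
  have hnm : ‖(n : ℂ) / m‖ * m ≤ n := by
    rw [norm_div, Complex.norm_natCast, Complex.norm_natCast]
    rcases eq_or_ne (m : ℝ) 0 with hm | hm <;> simp [hm]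
  have hsampling := l2norm_sampling_mulVec_le T Tdag ω y
  have hproj : l2norm ((T * Tdag) *ᵥ y) ≤ l1norm y := by
    simpa using (l2norm_mulVec_le_maxColL2_mul_l1norm _ y).trans
      (mul_le_mul_of_nonneg_right hmp.maxColL2_mul_pinv_le_one (l1norm_nonneg y))
  rw [sub_mulVec, smul_mulVec, sub_eq_add_neg]
  refine (l2norm_add_le _ _).trans ?_
  rw [l2norm_neg, l2norm_smul]
  have := mul_le_mul_of_nonneg_right hnm
    (mul_nonneg (mul_nonneg (maxColL2_nonneg T) (maxColL2_nonneg Tdagᴴ)) (l1norm_nonneg y))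
  nlinarith [norm_nonneg ((n : ℂ) / m)]

end Operators

section DualCertificate

variable {N : ℕ}

lemma norm_add_ge_of_ne_zero {a : ℂ} (ha : a ≠ 0) (b c : ℂ) :
    ‖a‖ + (star c * b).re - ‖c - a / ‖a‖‖ * ‖b‖ ≤ ‖a + b‖ := by
  set s : ℂ := a / ‖a‖
  have hs : ‖s‖ = 1 := by simp [s, ha]
  have hsa : star s * a = ‖a‖ := by
    simp only [s, star_div₀, Complex.star_def, Complex.conj_ofReal, div_mul_eq_mul_div,
      Complex.conj_mul']
    field_simp [ha]
  have hsub : (star (c - s) * b).re ≤ ‖c - s‖ * ‖b‖ := by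
    rw [← norm_star (c - s), ← norm_mul]
    exact Complex.re_le_norm _
  have hsupp : (star s * (a + b)).re ≤ ‖a + b‖ := by
    simpa [norm_mul, hs] using Complex.re_le_norm (star s * (a + b))
  have hre : (star s * (a + b)).re = ‖a‖ + (star c * b).re - (star (c - s) * b).re := by
    simp only [mul_add, hsa, star_sub, sub_mul, Complex.add_re, Complex.sub_re, Complex.ofReal_re]
    ring
  linarith

lemma l1norm_add_ge {y z v : Fin N → ℂ} {J : Set (Fin N)} (hJ : J = {i | y i ≠ 0})
    (hv : ∀ i ∉ J, ‖v i‖ ≤ 1 / 2) :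
    l1norm y + (star v ⬝ᵥ z).re - l2norm (J.indicator (v - csgn y)) * l2norm (J.indicator z)
      + l1norm (Jᶜ.indicator z) / 2 ≤ l1norm (y + z) := by
  have hpoint : ∀ i, ‖y i‖ + (star (v i) * z i).re
      - ‖J.indicator (v - csgn y) i‖ * ‖J.indicator z i‖ + ‖Jᶜ.indicator z i‖ / 2
        ≤ ‖y i + z i‖ := by
    intro i
    by_cases hi : i ∈ J
    · have hyi : y i ≠ 0 := by simpa [hJ] using hi
      simpa [hi, csgn, hyi] using norm_add_ge_of_ne_zero hyi (z i) (v i)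
    · have hyi : y i = 0 := by simpa [hJ] using hi
      have hre : (star (v i) * z i).re ≤ ‖z i‖ / 2 := by
        have := mul_le_mul_of_nonneg_right (hv i hi) (norm_nonneg (z i))
        have := Complex.re_le_norm (star (v i) * z i)
        rw [norm_mul, norm_star] at this
        linarith
      simp only [hi, hyi, not_false_eq_true, Set.indicator_of_notMem, Set.indicator_of_mem,
        Set.mem_compl_iff, norm_zero, mul_zero, zero_add]
      linarith
  have hCS : ∑ i, ‖J.indicator (v - csgn y) i‖ * ‖J.indicator z i‖ ≤
      l2norm (J.indicator (v - csgn y)) * l2norm (J.indicator z) :=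
    Real.sum_mul_le_sqrt_mul_sqrt _ _ _
  have hsum := Finset.sum_le_sum fun i (_ : i ∈ Finset.univ) => hpoint i
  simp only [Finset.sum_add_distrib, Finset.sum_sub_distrib, ← Finset.sum_div,
    ← Complex.re_sum] at hsum
  simp only [l1norm, dotProduct, Pi.star_apply, Pi.add_apply]
  linarith

lemma l1norm_lt_add_of_inexact_certificate {K : ℝ} (hK : 2 ≤ K) {y z v : Fin N → ℂ}
    {J : Set (Fin N)} (hJ : J = {i | y i ≠ 0}) (hz : z ≠ 0) (horth : star v ⬝ᵥ z = 0)
    (hvJ : l2norm (J.indicator (v - csgn y)) ≤ 1 / (7 * K)) (hvJc : ∀ i ∉ J, ‖v i‖ ≤ 1 / 2)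
    (hzJ : l2norm (J.indicator z) ≤ 2 * (K + 1) * l1norm (Jᶜ.indicator z)) :
    l1norm y < l1norm (y + z) := by
  have hoff : 0 < l1norm (Jᶜ.indicator z) := by
    refine (l1norm_nonneg _).lt_of_ne fun h0 => hz ?_
    have hon : J.indicator z = 0 :=
      l2norm_eq_zero_iff.mp (le_antisymm (by simpa [← h0] using hzJ) (l2norm_nonneg _))
    rw [← Set.indicator_self_add_compl J z, hon, l1norm_eq_zero_iff.mp h0.symm, add_zero]
  have hloss : l2norm (J.indicator (v - csgn y)) * l2norm (J.indicator z) ≤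
      3 / 7 * l1norm (Jᶜ.indicator z) := by
    calc _ ≤ 1 / (7 * K) * (2 * (K + 1) * l1norm (Jᶜ.indicator z)) :=
          mul_le_mul hvJ hzJ (l2norm_nonneg _) (by positivity)
      _ ≤ 3 / 7 * l1norm (Jᶜ.indicator z) := by
          rw [← mul_assoc]
          refine mul_le_mul_of_nonneg_right ?_ hoff.le
          rw [div_mul_eq_mul_div, one_mul, div_le_iff₀ (by positivity)]
          nlinarith
  have := l1norm_add_ge (z := z) hJ hvJc
  rw [horth, Complex.zero_re] at this
  linarith

lemma l2norm_indicator_le_of_mulVec_eq_neg {B : Matrix (Fin N) (Fin N) ℂ} {J : Set (Fin N)}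
    (hB : specNorm (projMat J * B * projMat J) ≤ 1 / 2) {z : Fin N → ℂ} (hz : B *ᵥ z = -z) :
    l2norm (J.indicator z) ≤ 2 * l2norm (B *ᵥ Jᶜ.indicator z) := by
  have hsplit : -J.indicator z =
      (projMat J * B * projMat J) *ᵥ J.indicator z + J.indicator (B *ᵥ Jᶜ.indicator z) := by
    rw [← mulVec_mulVec, ← mulVec_mulVec, projMat_mulVec, projMat_mulVec,
      Set.indicator_indicator, Set.inter_self, ← Set.indicator_add', ← mulVec_add,
      Set.indicator_self_add_compl, hz, Set.indicator_neg']
  have hle : l2norm (J.indicator z) ≤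
      specNorm (projMat J * B * projMat J) * l2norm (J.indicator z) +
        l2norm (B *ᵥ Jᶜ.indicator z) := by
    conv_lhs => rw [← l2norm_neg, hsplit]
    exact (l2norm_add_le _ _).trans
      (add_le_add (l2norm_mulVec_le_specNorm _ _) (l2norm_indicator_le _ _))
  nlinarith [mul_le_mul_of_nonneg_right hB (l2norm_nonneg (J.indicator z))]

end DualCertificate

theorem uniqueness_by_inexact_dual_certificate_general
    (n N m : ℕ) (hm : 0 < m)
    (T : Matrix (Fin N) (Fin n) ℂ) (Tdag : Matrix (Fin n) (Fin N) ℂ)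
    (hinj : Function.Injective T.mulVec)
    (hmp : IsMoorePenrose T Tdag)
    (x : Fin n → ℂ) (ω : Fin m → Fin n)
    (J : Set (Fin N)) (hJ : J = {i | T.mulVec x i ≠ 0})
    (hloc : specNorm (projMat J *
        (((n : ℂ) / m) • (T * (sampMat ω)ᴴ * sampMat ω * Tdag) - T * Tdag) *
        projMat J) ≤ 1 / 2)
    (v : Fin N → ℂ)
    (hv1 : ((T * Tdag - T * projMat (Set.range ω) * Tdag)ᴴ).mulVec v = 0)
    (hv2 : l2norm ((projMat J).mulVec (v - csgn (T.mulVec x))) ≤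
      1 / (7 * n * maxColL2 T * maxColL2 Tdagᴴ))
    (hv3 : linfnorm (((1 : Matrix (Fin N) (Fin N) ℂ) - projMat J).mulVec v) ≤ 1 / 2) :
    ∀ g : Fin n → ℂ, (sampMat ω).mulVec g = (sampMat ω).mulVec x → g ≠ x →
      l1norm (T.mulVec x) < l1norm (T.mulVec g) := by
  intro g hg hne
  rcases le_or_gt n 1 with hn1 | hn2
  · exact absurd (sampMat_mulVec_injective_of_le_one hn1 hm ω hg) hne
  have hTdagT : Tdag * T = 1 := hmp.pinv_mul_eq_one hinj
  have hK : 2 ≤ (n : ℝ) * maxColL2 T * maxColL2 Tdagᴴ := by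
    have := one_le_maxColL2_mul_maxColL2_conjTranspose T Tdag hTdagT ⟨0, by omega⟩
    have : (2 : ℝ) ≤ n := by exact_mod_cast hn2
    rw [mul_assoc]
    nlinarith
  have hgx : sampMat ω *ᵥ (g - x) = 0 := by rw [mulVec_sub, hg, sub_self]
  set z := T *ᵥ (g - x)
  have hz : z ≠ 0 := fun h => hne (sub_eq_zero.mp (hinj (h.trans (mulVec_zero T).symm)))
  have hTdagz : Tdag *ᵥ z = g - x := by rw [mulVec_mulVec, hTdagT, one_mulVec]
  have hBz : (((n : ℂ) / m) • (T * (sampMat ω)ᴴ * sampMat ω * Tdag) - T * Tdag) *ᵥ z = -z := by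
    simp only [sub_mulVec, smul_mulVec, ← mulVec_mulVec, hTdagz, hgx, mulVec_zero, smul_zero,
      zero_sub, z]
  have hAz : (T * Tdag - T * projMat (Set.range ω) * Tdag) *ᵥ z = z := by
    simp only [sub_mulVec, ← mulVec_mulVec, hTdagz, projMat_range_mulVec_eq_zero hgx,
      mulVec_zero, sub_zero, z]
  rw [show T *ᵥ g = T *ᵥ x + z by simp [z, mulVec_sub]]
  refine l1norm_lt_add_of_inexact_certificate hK hJ hz
    (star_dotProduct_eq_zero_of_conjTranspose_mulVec_eq_zero hv1 hAz) ?_ ?_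
    ((l2norm_indicator_le_of_mulVec_eq_neg hloc hBz).trans ?_)
  · simpa only [projMat_mulVec, mul_assoc] using hv2
  · intro i hi
    simpa [one_sub_projMat_mulVec, hi] using (norm_le_linfnorm _ i).trans hv3
  · rw [mul_assoc]
    exact mul_le_mul_of_nonneg_left (l2norm_sampling_sub_mulVec_le hmp ω _) zero_le_two

/-- Lemma 1 (uniqueness via an inexact dual certificate). -/
theorem uniqueness_by_inexact_dual_certificate
    (n N m : ℕ) (hn : 0 < n) (hN : 0 < N) (hm : 0 < m)
    (T : Matrix (Fin N) (Fin n) ℂ) (Tdag : Matrix (Fin n) (Fin N) ℂ)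
    (hinj : Function.Injective T.mulVec)
    (hmp : IsMoorePenrose T Tdag)
    (x : Fin n → ℂ) (ω : Fin m → Fin n)
    (J : Set (Fin N)) (hJ : J = {i | T.mulVec x i ≠ 0})
    (hloc : specNorm (projMat J *
        (((n : ℂ) / m) • (T * (sampMat ω)ᴴ * sampMat ω * Tdag) - T * Tdag) *
        projMat J) ≤ 1 / 2)
    (v : Fin N → ℂ)
    (hv1 : ((T * Tdag - T * projMat (Set.range ω) * Tdag)ᴴ).mulVec v = 0)
    (hv2 : l2norm ((projMat J).mulVec (v - csgn (T.mulVec x))) ≤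
      1 / (7 * n * maxColL2 T * maxColL2 Tdagᴴ))
    (hv3 : linfnorm (((1 : Matrix (Fin N) (Fin N) ℂ) - projMat J).mulVec v) ≤ 1 / 2) :
    ∀ g : Fin n → ℂ, (sampMat ω).mulVec g = (sampMat ω).mulVec x → g ≠ x →
      l1norm (T.mulVec x) < l1norm (T.mulVec g) :=
  uniqueness_by_inexact_dual_certificate_general n N m hm T Tdag hinj hmp x ω J hJ hloc v hv1 hv2
    hv3

end TSR
end
end
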